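/- Let H = {(x,y) ∈ ℝ² : y < L} with L > 0 and G_H, H_H as for the Green's function of the half-plane. For J ≥ 1, α_{ij} > 0 (i ≠ j), β_i > 0, the functional Ξ⁻(z₁,…,z_J) = Σ_{i≠j} α_{ij} G_H(z_i,z_j) − Σ_i β_i H_H(z_i,z_i), defined on H^J minus the diagonal, has no critical points. -/

import Mathlib

/-!
Dilating a configuration about a point `p` of the boundary line `y = L` by a factor `s ≠ 0`
leaves every `G_H(z_i, z_j)` unchanged (the reflection commutes with the dilation and both
distances scale by `|s|`), while every `H_H(z_i, z_i)` grows by `(1/2π) log s`. Along the curve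
`t ↦ dilation by eᵗ` the functional `Ξ⁻` is therefore affine in `t` with slope
`-(∑ β_i)/(2π) < 0`, so its derivative never vanishes.
-/

/-- Reflection of a point of `ℝ²` across the horizontal line `y = L`. -/
noncomputable def reflAcross (L : ℝ) (η : EuclideanSpace ℝ (Fin 2)) :
    EuclideanSpace ℝ (Fin 2) :=
  WithLp.toLp 2 (fun i => if i = 1 then 2 * L - η 1 else η i)

/-- Green's function of the half-plane `H = {y < L}`:
`G_H(z,η) = (1/(2π)) ln(|z−η*|/|z−η|)`, with `η*` the reflection of `η` across `y = L`. -/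
noncomputable def greenHalfPlane (L : ℝ) (z η : EuclideanSpace ℝ (Fin 2)) : ℝ :=
  (1 / (2 * Real.pi)) * Real.log (dist z (reflAcross L η) / dist z η)

/-- Robin function (regular part on the diagonal) of the half-plane `H = {y < L}`:
`H_H(z,z) = (1/(2π)) ln(2(L − y))` for `z = (x,y)`. -/
noncomputable def robinHalfPlane (L : ℝ) (z : EuclideanSpace ℝ (Fin 2)) : ℝ :=
  (1 / (2 * Real.pi)) * Real.log (2 * (L - z 1))

open AffineMap

theorem dist_homothety_homothety {𝕜 V P : Type*} [NormedField 𝕜] [SeminormedAddCommGroup V]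
    [NormedSpace 𝕜 V] [PseudoMetricSpace P] [NormedAddTorsor V P] (c x y : P) (r : 𝕜) :
    dist (homothety c r x) (homothety c r y) = ‖r‖ * dist x y := by
  rw [dist_eq_norm_vsub V, dist_eq_norm_vsub V, ← linearMap_vsub, homothety_linear,
    LinearMap.smul_apply, LinearMap.id_apply, norm_smul]

theorem homothety_apply_apply {ι : Type*} (p x : EuclideanSpace ℝ ι) (s : ℝ) (i : ι) :
    homothety p s x i = s * (x i - p i) + p i := by
  simp [homothety_apply]

theorem reflAcross_homothety {L : ℝ} {p : EuclideanSpace ℝ (Fin 2)} (hp : p 1 = L) (s : ℝ)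
    (x : EuclideanSpace ℝ (Fin 2)) :
    reflAcross L (homothety p s x) = homothety p s (reflAcross L x) := by
  ext i
  fin_cases i
  · simp [reflAcross, homothety_apply_apply]
  · simp only [reflAcross, homothety_apply_apply, Fin.isValue, Fin.mk_one, ↓reduceIte, hp]
    ring

theorem greenHalfPlane_homothety {L : ℝ} {p : EuclideanSpace ℝ (Fin 2)} (hp : p 1 = L) {s : ℝ}
    (hs : s ≠ 0) (z η : EuclideanSpace ℝ (Fin 2)) :
    greenHalfPlane L (homothety p s z) (homothety p s η) = greenHalfPlane L z η := by
  rw [greenHalfPlane, greenHalfPlane, reflAcross_homothety hp, dist_homothety_homothety,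
    dist_homothety_homothety, mul_div_mul_left _ _ (norm_ne_zero_iff.mpr hs)]

theorem robinHalfPlane_homothety {L : ℝ} {p : EuclideanSpace ℝ (Fin 2)} (hp : p 1 = L) {s : ℝ}
    (hs : s ≠ 0) {z : EuclideanSpace ℝ (Fin 2)} (hz : z 1 ≠ L) :
    robinHalfPlane L (homothety p s z) = robinHalfPlane L z + 1 / (2 * Real.pi) * Real.log s := by
  have hscale : 2 * (L - homothety p s z 1) = s * (2 * (L - z 1)) := by
    rw [homothety_apply_apply, hp]
    ring
  have hz' : 2 * (L - z 1) ≠ 0 := by simpa [sub_eq_zero] using hz.symm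
  rw [robinHalfPlane, robinHalfPlane, hscale, Real.log_mul hs hz']
  ring

theorem not_hasFDerivAt_zero_of_hasDerivAt_comp {E : Type*} [NormedAddCommGroup E]
    [NormedSpace ℝ E] {f : E → ℝ} {γ : ℝ → E} {t c : ℝ} (hγ : DifferentiableAt ℝ γ t)
    (hfγ : HasDerivAt (f ∘ γ) c t) (hc : c ≠ 0) : ¬ HasFDerivAt f (0 : E →L[ℝ] ℝ) (γ t) := by
  intro hf
  have hzero : HasDerivAt (f ∘ γ) 0 t := by
    simpa using hf.comp_hasDerivAt t hγ.hasDerivAt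
  exact hc (hfγ.unique hzero)

noncomputable def xiMinus (L : ℝ) {J : ℕ} (α : Fin J → Fin J → ℝ) (β : Fin J → ℝ)
    (w : Fin J → EuclideanSpace ℝ (Fin 2)) : ℝ :=
  (∑ i : Fin J, ∑ j : Fin J, if i = j then 0 else α i j * greenHalfPlane L (w i) (w j))
    - ∑ i : Fin J, β i * robinHalfPlane L (w i)

theorem xiMinus_homothety {L : ℝ} {p : EuclideanSpace ℝ (Fin 2)} (hp : p 1 = L) {s : ℝ}
    (hs : s ≠ 0) {J : ℕ} (α : Fin J → Fin J → ℝ) (β : Fin J → ℝ)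
    {w : Fin J → EuclideanSpace ℝ (Fin 2)} (hw : ∀ i, w i 1 ≠ L) :
    xiMinus L α β (fun i => homothety p s (w i))
      = xiMinus L α β w - (∑ i, β i) / (2 * Real.pi) * Real.log s := by
  simp only [xiMinus, greenHalfPlane_homothety hp hs, robinHalfPlane_homothety hp hs (hw _),
    mul_add, Finset.sum_add_distrib, ← Finset.sum_mul]
  ring

theorem no_critical_points_green_minus_general (L : ℝ)
    (J : ℕ) (hJ : 1 ≤ J)
    (α : Fin J → Fin J → ℝ)
    (β : Fin J → ℝ) (hβ : ∀ i, 0 < β i)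
    (z : Fin J → EuclideanSpace ℝ (Fin 2))
    (hzH : ∀ i, z i 1 < L) :
    ¬ HasFDerivAt
        (fun w : Fin J → EuclideanSpace ℝ (Fin 2) =>
          (∑ i : Fin J, ∑ j : Fin J,
            if i = j then 0 else α i j * greenHalfPlane L (w i) (w j))
          - ∑ i : Fin J, β i * robinHalfPlane L (w i))
        (0 : (Fin J → EuclideanSpace ℝ (Fin 2)) →L[ℝ] ℝ) z := by
  have : Nonempty (Fin J) := Fin.pos_iff_nonempty.mp hJ
  set p : EuclideanSpace ℝ (Fin 2) := EuclideanSpace.single 1 L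
  have hp : p 1 = L := by simp [p]
  set γ : ℝ → Fin J → EuclideanSpace ℝ (Fin 2) := fun t i => homothety p (Real.exp t) (z i)
  have hγ : DifferentiableAt ℝ γ 0 := by
    simp only [γ, homothety_apply, vsub_eq_sub, vadd_eq_add]
    fun_prop
  have hγz : γ 0 = z := by simp [γ]
  set c := (∑ i, β i) / (2 * Real.pi)
  have hc : 0 < c := by
    have := Finset.sum_pos (fun i _ => hβ i) Finset.univ_nonempty
    positivity
  have hxiγ : xiMinus L α β ∘ γ = fun t => xiMinus L α β z - c * t := by
    funext t
    simp only [Function.comp_apply, γ]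
    rw [xiMinus_homothety hp (Real.exp_ne_zero t) α β (fun i => (hzH i).ne), Real.log_exp]
  have hderiv : HasDerivAt (xiMinus L α β ∘ γ) (-c) 0 := by
    rw [hxiγ]
    simpa using ((hasDerivAt_id (0 : ℝ)).const_mul c).const_sub (xiMinus L α β z)
  rw [← hγz]
  exact not_hasFDerivAt_zero_of_hasDerivAt_comp hγ hderiv (neg_ne_zero.mpr hc.ne')

/-- The functional `Ξ⁻ = Σ_{i≠j} α_{ij} G_H(z_i,z_j) − Σ_i β_i H_H(z_i,z_i)` on `H^J`
minus the diagonal (`H = {y < L}`, `L > 0`) has no critical points. -/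
theorem no_critical_points_green_minus (L : ℝ) (hL : 0 < L)
    (J : ℕ) (hJ : 1 ≤ J)
    (α : Fin J → Fin J → ℝ) (hα : ∀ i j, i ≠ j → 0 < α i j)
    (β : Fin J → ℝ) (hβ : ∀ i, 0 < β i)
    (z : Fin J → EuclideanSpace ℝ (Fin 2))
    (hzH : ∀ i, z i 1 < L) (hz : Function.Injective z) :
    ¬ HasFDerivAt
        (fun w : Fin J → EuclideanSpace ℝ (Fin 2) =>
          (∑ i : Fin J, ∑ j : Fin J,
            if i = j then 0 else α i j * greenHalfPlane L (w i) (w j))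
          - ∑ i : Fin J, β i * robinHalfPlane L (w i))
        (0 : (Fin J → EuclideanSpace ℝ (Fin 2)) →L[ℝ] ℝ) z :=
  no_critical_points_green_minus_general L J hJ α β hβ z hzH
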